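/- Let f : ℝ × ℝ → E be continuous into a Banach space E, and define F(t) = ∫₀ᵗ ∫₀ᵗ f(s₁, s₂) ds₂ ds₁. Then F is differentiable on ℝ with F'(t) = ∫₀ᵗ f(t, s) ds + ∫₀ᵗ f(s, t) ds. -/

import Mathlib

open MeasureTheory intervalIntegral

/-!
Write `F(t) = G(t, t)` with `G(x, y) = ∫₀ˣ ∫₀ʸ f(s₁, s₂) ds₂ ds₁`. By the fundamental theorem of
calculus `∂ₓG(x, y) = ∫₀ʸ f(x, s) ds`, and after swapping the order of integration (Fubini)
`∂ᵧG(x, y) = ∫₀ˣ f(s, y) ds`. Both partial derivatives are continuous, so `G` is differentiable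
and the chain rule along the diagonal `t ↦ (t, t)` gives `F'(t) = ∂ₓG(t, t) + ∂ᵧG(t, t)`.
-/

section DoubleIntervalIntegral

open ContinuousLinearMap

variable {E : Type*} [NormedAddCommGroup E] [NormedSpace ℝ E] {f : ℝ × ℝ → E}

theorem intervalIntegral_intervalIntegral_swap_of_continuous (hf : Continuous f) (a x b y : ℝ) :
    ∫ s₁ in a..x, ∫ s₂ in b..y, f (s₁, s₂) = ∫ s₂ in b..y, ∫ s₁ in a..x, f (s₁, s₂) :=
  intervalIntegral_intervalIntegral_swap <|
    (hf.continuousOn.integrableOn_compact (isCompact_uIcc.prod isCompact_uIcc)).mono_set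
      (Set.prod_mono Set.uIoc_subset_uIcc Set.uIoc_subset_uIcc)

variable [CompleteSpace E]

theorem hasDerivAt_intervalIntegral_intervalIntegral_left (hf : Continuous f) (a b x y : ℝ) :
    HasDerivAt (fun x => ∫ s₁ in a..x, ∫ s₂ in b..y, f (s₁, s₂)) (∫ s in b..y, f (x, s)) x :=
  (continuous_parametric_intervalIntegral_of_continuous' (f := fun s₁ s₂ => f (s₁, s₂)) hf b y
    |>.integral_hasStrictDerivAt a x).hasDerivAt

theorem hasDerivAt_intervalIntegral_intervalIntegral_right (hf : Continuous f) (a b x y : ℝ) :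
    HasDerivAt (fun y => ∫ s₁ in a..x, ∫ s₂ in b..y, f (s₁, s₂)) (∫ s in a..x, f (s, y)) y := by
  simp_rw [intervalIntegral_intervalIntegral_swap_of_continuous hf a x b]
  exact hasDerivAt_intervalIntegral_intervalIntegral_left (hf.comp continuous_swap) b a y x

theorem hasStrictFDerivAt_intervalIntegral_intervalIntegral (hf : Continuous f) (a b : ℝ)
    (p : ℝ × ℝ) :
    HasStrictFDerivAt (fun q : ℝ × ℝ => ∫ s₁ in a..q.1, ∫ s₂ in b..q.2, f (s₁, s₂))
      ((toSpanSingleton ℝ (∫ s in b..p.2, f (p.1, s))).coprod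
        (toSpanSingleton ℝ (∫ s in a..p.1, f (s, p.2)))) p := by
  have hcont : ∀ {g : ℝ × ℝ → E}, Continuous g →
      ContinuousAt (fun q => toSpanSingleton ℝ (g q)) p :=
    fun hg => (toSpanSingletonCLE.continuous.comp hg).continuousAt
  have hcont₁ : Continuous fun q : ℝ × ℝ => ∫ s in b..q.2, f (q.1, s) :=
    continuous_parametric_intervalIntegral_of_continuous (by fun_prop) continuous_snd
  have hcont₂ : Continuous fun q : ℝ × ℝ => ∫ s in a..q.1, f (s, q.2) :=
    continuous_parametric_intervalIntegral_of_continuous (by fun_prop) continuous_fst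
  exact hasStrictFDerivAt_uncurry_coprod
    (f := fun x y => ∫ s₁ in a..x, ∫ s₂ in b..y, f (s₁, s₂))
    (f₁ := fun x y => toSpanSingleton ℝ (∫ s in b..y, f (x, s)))
    (f₂ := fun x y => toSpanSingleton ℝ (∫ s in a..x, f (s, y)))
    (.of_forall fun q => hasDerivAt_intervalIntegral_intervalIntegral_left hf a b q.1 q.2)
    (.of_forall fun q => hasDerivAt_intervalIntegral_intervalIntegral_right hf a b q.1 q.2)
    (hcont hcont₁) (hcont hcont₂)

end DoubleIntervalIntegral

/-- Leibniz rule for a double integral over the expanding square `[0,t]²`: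
if `f` is continuous then `F(t) = ∫₀ᵗ∫₀ᵗ f(s₁,s₂) ds₂ ds₁` is differentiable with
`F'(t) = ∫₀ᵗ f(t,s) ds + ∫₀ᵗ f(s,t) ds`. -/
theorem hasDerivAt_double_interval_integral
    {E : Type*} [NormedAddCommGroup E] [NormedSpace ℝ E] [CompleteSpace E]
    (f : ℝ × ℝ → E) (hf : Continuous f) (t : ℝ) :
    HasDerivAt (fun t : ℝ => ∫ s₁ in (0:ℝ)..t, ∫ s₂ in (0:ℝ)..t, f (s₁, s₂))
      ((∫ s in (0:ℝ)..t, f (t, s)) + ∫ s in (0:ℝ)..t, f (s, t)) t := by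
  have hdiag : HasDerivAt (fun t : ℝ => (t, t)) (1, 1) t :=
    (hasDerivAt_id t).prodMk (hasDerivAt_id t)
  have hcomp := (hasStrictFDerivAt_intervalIntegral_intervalIntegral hf 0 0 (t, t)).hasFDerivAt
    |>.comp_hasDerivAt (f := fun t : ℝ => (t, t)) t hdiag
  simpa [Function.comp_def] using hcomp
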